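/- Alternative reformulation of the Euler–Lagrange equation (Proposition A.1). Suppose φ is smooth, g > 0 everywhere, and φ satisfies the Euler–Lagrange equation ∂_u(∂_ūφ·g^{−1/2}) + ∂_ū((∂_uφ + Ψ'(u) − (Ψ'(u))²·∂_ūφ)·g^{−1/2}) = 0. Then at every point Box_g φ = S̃₀, where S̃₀ := (1/g²)·(1−g)·(Ψ'(u))²·∂_ū²φ + (1/g²)·(1−g)·Ψ'(u)·∂_uφ·∂_ū²φ − (1/g²)·(Ψ'(u))³·∂_ūφ·∂_ū²φ + (1/g²)·Ψ'(u)·∂_ūφ·∂_ū∂_uφ + (1/g)·Ψ'(u)·∂_ūφ·∂_u∂_ūφ − (1/√g)·(Ψ'(u))²·∂_ūφ·∂_ū(g^{−1/2}) + (1/g)·Ψ''(u)·(∂_ūφ)² + (1/√g)·Ψ'(u)·(∂_ūφ)²·∂_u(g^{−1/2}) − (1/√g)·Ψ'(u)·∂_ūφ·∂_uφ·∂_ū(g^{−1/2}). -/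

import Mathlib

noncomputable section

/-- partial derivative in the first variable (`∂_u`) -/
def pd1 (f : ℝ × ℝ → ℝ) (p : ℝ × ℝ) : ℝ := deriv (fun s => f (s, p.2)) p.1

/-- partial derivative in the second variable (`∂_ū`) -/
def pd2 (f : ℝ × ℝ → ℝ) (p : ℝ × ℝ) : ℝ := deriv (fun s => f (p.1, s)) p.2

/-- the determinant `g = 1 − 2∂_uφ∂_ūφ − 2Ψ'(u)∂_ūφ + (Ψ'(u))²(∂_ūφ)²` -/
def gmet (Ψ : ℝ → ℝ) (φ : ℝ × ℝ → ℝ) (p : ℝ × ℝ) : ℝ :=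
  1 - 2 * pd1 φ p * pd2 φ p - 2 * deriv Ψ p.1 * pd2 φ p
    + (deriv Ψ p.1)^2 * (pd2 φ p)^2

/-- the linear-truncation determinant `g̊ = (1 − Ψ'(u)∂_ūφ)²` -/
def gring (Ψ : ℝ → ℝ) (φ : ℝ × ℝ → ℝ) (p : ℝ × ℝ) : ℝ :=
  (1 - deriv Ψ p.1 * pd2 φ p)^2

/-- inverse metric component `g^{uu} = −(∂_ūφ)²/g` -/
def guu (Ψ : ℝ → ℝ) (φ : ℝ × ℝ → ℝ) (p : ℝ × ℝ) : ℝ :=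
  -(pd2 φ p)^2 / gmet Ψ φ p

/-- inverse metric component `g^{uū} = g^{ūu} = (−1 + Ψ'(u)∂_ūφ + ∂_uφ∂_ūφ)/g` -/
def guub (Ψ : ℝ → ℝ) (φ : ℝ × ℝ → ℝ) (p : ℝ × ℝ) : ℝ :=
  (-1 + deriv Ψ p.1 * pd2 φ p + pd1 φ p * pd2 φ p) / gmet Ψ φ p

/-- inverse metric component `g^{ūū} = −(2Ψ'(u) + ∂_uφ)∂_uφ/g` -/
def gubub (Ψ : ℝ → ℝ) (φ : ℝ × ℝ → ℝ) (p : ℝ × ℝ) : ℝ :=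
  -((2 * deriv Ψ p.1 + pd1 φ p) * pd1 φ p) / gmet Ψ φ p

/-- `g^{−1/2}` as a function of the point -/
def invSqrtg (Ψ : ℝ → ℝ) (φ : ℝ × ℝ → ℝ) (p : ℝ × ℝ) : ℝ :=
  (Real.sqrt (gmet Ψ φ p))⁻¹

/-- the Euler–Lagrange expression
`∂_u(∂_ūφ·g^{−1/2}) + ∂_ū((∂_uφ + Ψ'(u) − (Ψ'(u))²∂_ūφ)·g^{−1/2})` -/
def ELexpr (Ψ : ℝ → ℝ) (φ : ℝ × ℝ → ℝ) (p : ℝ × ℝ) : ℝ :=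
  pd1 (fun q => pd2 φ q * invSqrtg Ψ φ q) p
  + pd2 (fun q => (pd1 φ q + deriv Ψ q.1 - (deriv Ψ q.1)^2 * pd2 φ q) * invSqrtg Ψ φ q) p

/-- the Laplace–Beltrami operator `□_g φ` -/
def BoxG (Ψ : ℝ → ℝ) (φ : ℝ × ℝ → ℝ) (p : ℝ × ℝ) : ℝ :=
  invSqrtg Ψ φ p *
    (pd1 (fun q => Real.sqrt (gmet Ψ φ q) * (guu Ψ φ q * pd1 φ q + guub Ψ φ q * pd2 φ q)) p
     + pd2 (fun q => Real.sqrt (gmet Ψ φ q) * (guub Ψ φ q * pd1 φ q + gubub Ψ φ q * pd2 φ q)) p)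

/-- the source term `S₀(∂²φ,∂φ)` of Proposition 2.1 -/
def S0expr (Ψ : ℝ → ℝ) (φ : ℝ × ℝ → ℝ) (p : ℝ × ℝ) : ℝ :=
  (gring Ψ φ p / (gmet Ψ φ p)^2) * (1 - gmet Ψ φ p) * (deriv Ψ p.1)^2 * pd2 (pd2 φ) p
  + (1 / (gmet Ψ φ p)^2) * (gring Ψ φ p - gmet Ψ φ p) * deriv Ψ p.1 * pd1 φ p * pd2 (pd2 φ) p
  - (gring Ψ φ p / (gmet Ψ φ p)^2) * (deriv Ψ p.1)^3 * pd2 φ p * pd2 (pd2 φ) p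
  + (gring Ψ φ p / (gmet Ψ φ p)^2) * deriv Ψ p.1 * pd2 φ p * pd2 (pd1 φ) p
  + (2 * (gring Ψ φ p - 1) / gmet Ψ φ p) * pd1 (pd2 φ) p
  + (1 / gmet Ψ φ p) * deriv Ψ p.1 * pd2 φ p * pd1 (pd2 φ) p
  + (1 / gmet Ψ φ p) * deriv (deriv Ψ) p.1 * (pd2 φ p)^2
  - (gring Ψ φ p / Real.sqrt (gmet Ψ φ p)) * (deriv Ψ p.1)^2 * pd2 φ p
      * pd2 (invSqrtg Ψ φ) p
  + ((gring Ψ φ p - 1) / Real.sqrt (gmet Ψ φ p)) * pd2 φ p * pd1 (invSqrtg Ψ φ) p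
  + ((gring Ψ φ p - 1) / Real.sqrt (gmet Ψ φ p)) * pd1 φ p * pd2 (invSqrtg Ψ φ) p
  + (1 / Real.sqrt (gmet Ψ φ p)) * deriv Ψ p.1 * (pd2 φ p)^2 * pd1 (invSqrtg Ψ φ) p
  - (1 / Real.sqrt (gmet Ψ φ p)) * deriv Ψ p.1 * pd2 φ p * pd1 φ p * pd2 (invSqrtg Ψ φ) p

/-- the alternative source term `S̃₀(∂²φ,∂φ)` of Proposition A.1 -/
def S0tilde (Ψ : ℝ → ℝ) (φ : ℝ × ℝ → ℝ) (p : ℝ × ℝ) : ℝ :=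
  (1 / (gmet Ψ φ p)^2) * (1 - gmet Ψ φ p) * (deriv Ψ p.1)^2 * pd2 (pd2 φ) p
  + (1 / (gmet Ψ φ p)^2) * (1 - gmet Ψ φ p) * deriv Ψ p.1 * pd1 φ p * pd2 (pd2 φ) p
  - (1 / (gmet Ψ φ p)^2) * (deriv Ψ p.1)^3 * pd2 φ p * pd2 (pd2 φ) p
  + (1 / (gmet Ψ φ p)^2) * deriv Ψ p.1 * pd2 φ p * pd2 (pd1 φ) p
  + (1 / gmet Ψ φ p) * deriv Ψ p.1 * pd2 φ p * pd1 (pd2 φ) p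
  - (1 / Real.sqrt (gmet Ψ φ p)) * (deriv Ψ p.1)^2 * pd2 φ p * pd2 (invSqrtg Ψ φ) p
  + (1 / gmet Ψ φ p) * deriv (deriv Ψ) p.1 * (pd2 φ p)^2
  + (1 / Real.sqrt (gmet Ψ φ p)) * deriv Ψ p.1 * (pd2 φ p)^2 * pd1 (invSqrtg Ψ φ) p
  - (1 / Real.sqrt (gmet Ψ φ p)) * deriv Ψ p.1 * pd2 φ p * pd1 φ p * pd2 (invSqrtg Ψ φ) p

/-! Contracting the inverse metric with `dφ` and multiplying by `√g` cancels the determinant: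
the two fluxes in `□_g φ` are `∂_ūφ · g^{-1/2} · (Ψ'∂_ūφ - 1)` and
`-∂_uφ · g^{-1/2} · (1 + Ψ'∂_ūφ)`. Expanding them by the product rule and writing
`∂_ū g^{-1/2} = -½ g^{-3/2} ∂_ū g` turns `□_g φ = S̃₀ - g^{-1/2} · EL` into a rational identity
in the derivatives of `φ` up to order two (with `∂_u∂_ūφ = ∂_ū∂_uφ`), `Ψ'`, `Ψ''`, `√g` and
`∂_u g^{-1/2}`. This holds for every `C²` pair `(Ψ, φ)` with `g > 0`, and the Euler–Lagrange
equation removes the last term. -/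

section PartialDerivatives

variable {f : ℝ × ℝ → ℝ} {p : ℝ × ℝ}

theorem DifferentiableAt.hasDerivAt_pd1 (hf : DifferentiableAt ℝ f p) :
    HasDerivAt (fun s => f (s, p.2)) (pd1 f p) p.1 :=
  (hf.comp p.1 (differentiableAt_id.prodMk (differentiableAt_const _))).hasDerivAt

theorem DifferentiableAt.hasDerivAt_pd2 (hf : DifferentiableAt ℝ f p) :
    HasDerivAt (fun s => f (p.1, s)) (pd2 f p) p.2 :=
  (hf.comp p.2 ((differentiableAt_const _).prodMk differentiableAt_id)).hasDerivAt

theorem DifferentiableAt.pd1_eq_fderiv (hf : DifferentiableAt ℝ f p) :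
    pd1 f p = fderiv ℝ f p (1, 0) :=
  (hf.hasFDerivAt.comp_hasDerivAt p.1 ((hasDerivAt_id _).prodMk (hasDerivAt_const _ _))).deriv

theorem DifferentiableAt.pd2_eq_fderiv (hf : DifferentiableAt ℝ f p) :
    pd2 f p = fderiv ℝ f p (0, 1) :=
  (hf.hasFDerivAt.comp_hasDerivAt p.2 ((hasDerivAt_const _ _).prodMk (hasDerivAt_id _))).deriv

theorem Differentiable.pd1_eq_fderiv (hf : Differentiable ℝ f) :
    pd1 f = fun q => fderiv ℝ f q (1, 0) :=
  funext fun q => (hf q).pd1_eq_fderiv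

theorem Differentiable.pd2_eq_fderiv (hf : Differentiable ℝ f) :
    pd2 f = fun q => fderiv ℝ f q (0, 1) :=
  funext fun q => (hf q).pd2_eq_fderiv

theorem ContDiff.differentiable_pd1 (hf : ContDiff ℝ 2 f) : Differentiable ℝ (pd1 f) := by
  rw [(hf.differentiable two_ne_zero).pd1_eq_fderiv]
  fun_prop

theorem ContDiff.differentiable_pd2 (hf : ContDiff ℝ 2 f) : Differentiable ℝ (pd2 f) := by
  rw [(hf.differentiable two_ne_zero).pd2_eq_fderiv]
  fun_prop

theorem ContDiff.pd2_pd1_eq_pd1_pd2 (hf : ContDiff ℝ 2 f) (p : ℝ × ℝ) :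
    pd2 (pd1 f) p = pd1 (pd2 f) p := by
  have hd : Differentiable ℝ f := hf.differentiable two_ne_zero
  have hd2 : Differentiable ℝ (fderiv ℝ f) :=
    (hf.fderiv_right (m := 1) le_rfl).differentiable one_ne_zero
  rw [hd.pd1_eq_fderiv, hd.pd2_eq_fderiv, DifferentiableAt.pd2_eq_fderiv (by fun_prop),
    DifferentiableAt.pd1_eq_fderiv (by fun_prop), fderiv_clm_apply (hd2 p) (by fun_prop),
    fderiv_clm_apply (hd2 p) (by fun_prop)]
  simpa using (hf.contDiffAt.isSymmSndFDerivAt (by simp)).eq (0, 1) (1, 0)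

end PartialDerivatives

theorem HasDerivAt.sqrt_inv {h : ℝ → ℝ} {h' x : ℝ} (hh : HasDerivAt h h' x) (hx : 0 < h x) :
    HasDerivAt (fun y => (√(h y))⁻¹) (-(√(h x))⁻¹ ^ 3 * h' / 2) x := by
  have hs : √(h x) ≠ 0 := (Real.sqrt_pos.mpr hx).ne'
  refine ((hh.sqrt hx.ne').inv hs).congr_deriv ?_
  field_simp

theorem sqrt_gmet_mul_guu_pd1_add_guub_pd2 (Ψ : ℝ → ℝ) (φ : ℝ × ℝ → ℝ) (p : ℝ × ℝ) :
    √(gmet Ψ φ p) * (guu Ψ φ p * pd1 φ p + guub Ψ φ p * pd2 φ p)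
      = pd2 φ p * invSqrtg Ψ φ p * (deriv Ψ p.1 * pd2 φ p - 1) := by
  rw [guu, guub, invSqrtg, ← Real.sqrt_div_self]
  ring

theorem sqrt_gmet_mul_guub_pd1_add_gubub_pd2 (Ψ : ℝ → ℝ) (φ : ℝ × ℝ → ℝ) (p : ℝ × ℝ) :
    √(gmet Ψ φ p) * (guub Ψ φ p * pd1 φ p + gubub Ψ φ p * pd2 φ p)
      = -(pd1 φ p * invSqrtg Ψ φ p * (1 + deriv Ψ p.1 * pd2 φ p)) := by
  rw [guub, gubub, invSqrtg, ← Real.sqrt_div_self]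
  ring

section Smooth

variable {Ψ : ℝ → ℝ} {φ : ℝ × ℝ → ℝ} {p : ℝ × ℝ}

theorem differentiable_gmet (hΨ : ContDiff ℝ 2 Ψ) (hφ : ContDiff ℝ 2 φ) :
    Differentiable ℝ (gmet Ψ φ) := by
  have := hΨ.differentiable_deriv_two
  have := hφ.differentiable_pd1
  have := hφ.differentiable_pd2
  unfold gmet
  fun_prop

theorem differentiableAt_invSqrtg (hΨ : ContDiff ℝ 2 Ψ) (hφ : ContDiff ℝ 2 φ)
    (hp : 0 < gmet Ψ φ p) : DifferentiableAt ℝ (invSqrtg Ψ φ) p :=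
  ((differentiable_gmet hΨ hφ p).sqrt hp.ne').inv (Real.sqrt_pos.mpr hp).ne'

theorem pd2_invSqrtg (hφ : ContDiff ℝ 2 φ) (hp : 0 < gmet Ψ φ p) :
    pd2 (invSqrtg Ψ φ) p = invSqrtg Ψ φ p ^ 3 *
      (pd1 φ p * pd2 (pd2 φ) p + pd2 (pd1 φ) p * pd2 φ p + deriv Ψ p.1 * pd2 (pd2 φ) p
        - deriv Ψ p.1 ^ 2 * pd2 φ p * pd2 (pd2 φ) p) := by
  have ha := (hφ.differentiable_pd1 p).hasDerivAt_pd2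
  have hb := (hφ.differentiable_pd2 p).hasDerivAt_pd2
  have hgmet : HasDerivAt (fun s => gmet Ψ φ (p.1, s))
      (-2 * (pd1 φ p * pd2 (pd2 φ) p + pd2 (pd1 φ) p * pd2 φ p + deriv Ψ p.1 * pd2 (pd2 φ) p
        - deriv Ψ p.1 ^ 2 * pd2 φ p * pd2 (pd2 φ) p)) p.2 := by
    refine ((((ha.const_mul 2).mul hb).const_sub 1).sub (hb.const_mul (2 * deriv Ψ p.1))).add
      ((hb.pow 2).const_mul (deriv Ψ p.1 ^ 2)) |>.congr_deriv ?_
    ring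
  refine ((hgmet.sqrt_inv hp).deriv).trans ?_
  rw [invSqrtg]
  ring

theorem ELexpr_eq (hφ : ContDiff ℝ 2 φ) (hW : DifferentiableAt ℝ (invSqrtg Ψ φ) p) :
    ELexpr Ψ φ p = (pd1 (pd2 φ) p * invSqrtg Ψ φ p + pd2 φ p * pd1 (invSqrtg Ψ φ) p)
      + ((pd2 (pd1 φ) p - deriv Ψ p.1 ^ 2 * pd2 (pd2 φ) p) * invSqrtg Ψ φ p
        + (pd1 φ p + deriv Ψ p.1 - deriv Ψ p.1 ^ 2 * pd2 φ p) * pd2 (invSqrtg Ψ φ) p) := by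
  have ha₂ := (hφ.differentiable_pd1 p).hasDerivAt_pd2
  have hb₁ := (hφ.differentiable_pd2 p).hasDerivAt_pd1
  have hb₂ := (hφ.differentiable_pd2 p).hasDerivAt_pd2
  exact congrArg₂ (· + ·) (hb₁.mul hW.hasDerivAt_pd1).deriv
    (((ha₂.add_const (deriv Ψ p.1)).sub (hb₂.const_mul (deriv Ψ p.1 ^ 2))).mul
      hW.hasDerivAt_pd2).deriv

theorem BoxG_eq (hΨ : ContDiff ℝ 2 Ψ) (hφ : ContDiff ℝ 2 φ)
    (hW : DifferentiableAt ℝ (invSqrtg Ψ φ) p) :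
    BoxG Ψ φ p = invSqrtg Ψ φ p *
      (((pd1 (pd2 φ) p * invSqrtg Ψ φ p + pd2 φ p * pd1 (invSqrtg Ψ φ) p)
          * (deriv Ψ p.1 * pd2 φ p - 1)
        + pd2 φ p * invSqrtg Ψ φ p
          * (deriv (deriv Ψ) p.1 * pd2 φ p + deriv Ψ p.1 * pd1 (pd2 φ) p))
        + -((pd2 (pd1 φ) p * invSqrtg Ψ φ p + pd1 φ p * pd2 (invSqrtg Ψ φ) p)
            * (1 + deriv Ψ p.1 * pd2 φ p)
          + pd1 φ p * invSqrtg Ψ φ p * (deriv Ψ p.1 * pd2 (pd2 φ) p))) := by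
  have hc := (hΨ.differentiable_deriv_two p.1).hasDerivAt
  have ha₂ := (hφ.differentiable_pd1 p).hasDerivAt_pd2
  have hb₁ := (hφ.differentiable_pd2 p).hasDerivAt_pd1
  have hb₂ := (hφ.differentiable_pd2 p).hasDerivAt_pd2
  simp only [BoxG, sqrt_gmet_mul_guu_pd1_add_guub_pd2, sqrt_gmet_mul_guub_pd1_add_gubub_pd2]
  exact congrArg (invSqrtg Ψ φ p * ·) <| congrArg₂ (· + ·)
    ((hb₁.mul hW.hasDerivAt_pd1).mul ((hc.mul hb₁).sub_const 1)).deriv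
    ((ha₂.mul hW.hasDerivAt_pd2).mul ((hb₂.const_mul (deriv Ψ p.1)).const_add 1)).neg.deriv

theorem BoxG_eq_S0tilde_sub_invSqrtg_mul_ELexpr (hΨ : ContDiff ℝ 2 Ψ) (hφ : ContDiff ℝ 2 φ)
    (hp : 0 < gmet Ψ φ p) :
    BoxG Ψ φ p = S0tilde Ψ φ p - invSqrtg Ψ φ p * ELexpr Ψ φ p := by
  have hW := differentiableAt_invSqrtg hΨ hφ hp
  rw [BoxG_eq hΨ hφ hW, ELexpr_eq hφ hW, S0tilde, pd2_invSqrtg hφ hp, hφ.pd2_pd1_eq_pd1_pd2,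
    invSqrtg]
  have hs : √(gmet Ψ φ p) ≠ 0 := (Real.sqrt_pos.mpr hp).ne'
  have hgs : gmet Ψ φ p = √(gmet Ψ φ p) ^ 2 := (Real.sq_sqrt hp.le).symm
  generalize √(gmet Ψ φ p) = s at hs hgs ⊢
  rw [hgs]
  field_simp
  ring

end Smooth

/-- **Alternative reformulation of the Euler–Lagrange equation (Proposition A.1).**
If `φ` is smooth with `g > 0` everywhere and satisfies the Euler–Lagrange equation,
then `□_g φ = S̃₀` at every point. -/
theorem euler_lagrange_alternative_form
    (Ψ : ℝ → ℝ) (φ : ℝ × ℝ → ℝ)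
    (hΨ : ContDiff ℝ (⊤ : ℕ∞) Ψ) (hφ : ContDiff ℝ (⊤ : ℕ∞) φ)
    (hg : ∀ p : ℝ × ℝ, 0 < gmet Ψ φ p)
    (hEL : ∀ p : ℝ × ℝ, ELexpr Ψ φ p = 0) :
    ∀ p : ℝ × ℝ, BoxG Ψ φ p = S0tilde Ψ φ p := by
  intro p
  rw [BoxG_eq_S0tilde_sub_invSqrtg_mul_ELexpr (hΨ.of_le (by norm_cast))
    (hφ.of_le (by norm_cast)) (hg p), hEL p, mul_zero, sub_zero]
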